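/- Let g:(a,b)→ℝ be a C² function with |g''(x)| ≤ C/(x-a)² + C/(b-x)² for all x∈(a,b), let y₀=(a+b)/2 and suppose g'(x₀)=0 for some x₀∈(a,b). Set K = (1/4)·exp((b-a)/(x₀-a) + (b-a)/(b-x₀)). Then for every t ≥ 0, the Lebesgue measure of {x∈(a,b) : |g(x)-g(y₀)| ≥ t} divided by (b-a) is at most 2√K · e^{-t/(2C)}. -/

import Mathlib

/-!
Integrating the bound on `g''` from the critical point `x₀` gives
`|g' x| ≤ C / (x - a) + C / (b - x) + D` with `D = C / (x₀ - a) + C / (b - x₀)`; integrating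
once more from the midpoint `y₀` gives `|g x - g y₀| ≤ C |log (x - a) - log (b - x)| + D (b - a)`.
Hence at height `t` the superlevel set lies where `|log (x - a) - log (b - x)| ≥ s`, with
`s = t / C - (b - a) / (x₀ - a) - (b - a) / (b - x₀)`: two end intervals of length
`(b - a) / (1 + exp s)` each, and `2 / (1 + exp s) ≤ exp (-s / 2)` by AM-GM.
-/

open MeasureTheory Set Real

section DerivComparison

variable {s : Set ℝ} {f f' u u' : ℝ → ℝ}

theorem monotoneOn_of_hasDerivAt_nonneg_of_convex (hs : Convex ℝ s)
    (hu : ∀ x ∈ s, HasDerivAt u (u' x) x) (hu' : ∀ x ∈ s, 0 ≤ u' x) : MonotoneOn u s :=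
  monotoneOn_of_hasDerivWithinAt_nonneg hs (fun x hx => (hu x hx).continuousAt.continuousWithinAt)
    (fun x hx => (hu x (interior_subset hx)).hasDerivWithinAt)
    (fun x hx => hu' x (interior_subset hx))

theorem abs_sub_le_sub_of_abs_deriv_le (hs : Convex ℝ s) (hf : ∀ x ∈ s, HasDerivAt f (f' x) x)
    (hu : ∀ x ∈ s, HasDerivAt u (u' x) x) (hle : ∀ x ∈ s, |f' x| ≤ u' x)
    {x y : ℝ} (hx : x ∈ s) (hy : y ∈ s) (hxy : x ≤ y) : |f y - f x| ≤ u y - u x := by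
  have h₁ := monotoneOn_of_hasDerivAt_nonneg_of_convex hs (fun z hz => (hu z hz).sub (hf z hz))
    (fun z hz => sub_nonneg.2 (le_of_abs_le (hle z hz))) hx hy hxy
  have h₂ := monotoneOn_of_hasDerivAt_nonneg_of_convex hs (fun z hz => (hu z hz).add (hf z hz))
    (fun z hz => by linarith [neg_abs_le (f' z), hle z hz]) hx hy hxy
  simp only [Pi.sub_apply, Pi.add_apply] at h₁ h₂
  rw [abs_le]
  constructor <;> linarith

theorem abs_sub_le_abs_sub_of_abs_deriv_le (hs : Convex ℝ s)
    (hf : ∀ x ∈ s, HasDerivAt f (f' x) x) (hu : ∀ x ∈ s, HasDerivAt u (u' x) x)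
    (hle : ∀ x ∈ s, |f' x| ≤ u' x) {x y : ℝ} (hx : x ∈ s) (hy : y ∈ s) :
    |f y - f x| ≤ |u y - u x| := by
  rcases le_total x y with hxy | hyx
  · exact (abs_sub_le_sub_of_abs_deriv_le hs hf hu hle hx hy hxy).trans (le_abs_self _)
  · rw [abs_sub_comm, abs_sub_comm (u y)]
    exact (abs_sub_le_sub_of_abs_deriv_le hs hf hu hle hy hx hyx).trans (le_abs_self _)

end DerivComparison

theorem two_div_one_add_exp_le (s : ℝ) : 2 / (1 + exp s) ≤ exp (-s / 2) := by
  have hs : exp s = exp (s / 2) ^ 2 := by rw [← exp_nat_mul]; ring_nf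
  rw [div_le_iff₀ (by positivity), show -s / 2 = -(s / 2) by ring, exp_neg, hs]
  have := exp_pos (s / 2)
  field_simp
  nlinarith [sq_nonneg (exp (s / 2) - 1)]

theorem exp_mul_le_of_le_log_sub_log {s u v : ℝ} (hu : 0 < u) (hv : 0 < v)
    (h : s ≤ log u - log v) : exp s * v ≤ u := by
  rwa [← log_div hu.ne' hv.ne', le_log_iff_exp_le (div_pos hu hv), le_div_iff₀ hv] at h

section Barriers

variable {a b x : ℝ}

theorem hasDerivAt_div_sub_sub_div_sub (C : ℝ) (hx : x ∈ Ioo a b) :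
    HasDerivAt (fun y => C / (b - y) - C / (y - a)) (C / (x - a) ^ 2 + C / (b - x) ^ 2) x := by
  have hxa : x - a ≠ 0 := (sub_pos.2 hx.1).ne'
  have hbx : b - x ≠ 0 := (sub_pos.2 hx.2).ne'
  have h : HasDerivAt (fun y => C * (b - y)⁻¹ - C * (y - a)⁻¹)
      (C * (-(-1) / (b - x) ^ 2) - C * (-1 / (x - a) ^ 2)) x :=
    ((((hasDerivAt_id x).const_sub b).inv hbx).const_mul C).sub
      ((((hasDerivAt_id x).sub_const a).inv hxa).const_mul C)
  convert h using 1
  · simp only [div_eq_mul_inv]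
  · field_simp; ring

theorem hasDerivAt_mul_log_sub_log_add_mul (C D : ℝ) (hx : x ∈ Ioo a b) :
    HasDerivAt (fun y => C * (log (y - a) - log (b - y)) + D * y)
      (C / (x - a) + C / (b - x) + D) x := by
  have hxa : x - a ≠ 0 := (sub_pos.2 hx.1).ne'
  have hbx : b - x ≠ 0 := (sub_pos.2 hx.2).ne'
  have h : HasDerivAt (fun y => C * (log (y - a) - log (b - y)) + D * y)
      (C * (1 / (x - a) - -1 / (b - x)) + D * 1) x :=
    (((((hasDerivAt_id x).sub_const a).log hxa).sub
      (((hasDerivAt_id x).const_sub b).log hbx)).const_mul C).add ((hasDerivAt_id x).const_mul D)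
  convert h using 1
  field_simp; ring

theorem abs_le_div_add_div_of_abs_deriv_le {C x₀ : ℝ} (hC : 0 ≤ C) {v v' : ℝ → ℝ}
    (hv : ∀ x ∈ Ioo a b, HasDerivAt v (v' x) x)
    (hbound : ∀ x ∈ Ioo a b, |v' x| ≤ C / (x - a) ^ 2 + C / (b - x) ^ 2)
    (hx₀ : x₀ ∈ Ioo a b) (hv₀ : v x₀ = 0) (hx : x ∈ Ioo a b) :
    |v x| ≤ C / (x - a) + C / (b - x) + (C / (x₀ - a) + C / (b - x₀)) := by
  have h := abs_sub_le_abs_sub_of_abs_deriv_le (convex_Ioo a b) hv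
    (fun y hy => hasDerivAt_div_sub_sub_div_sub C hy) hbound hx₀ hx
  rw [hv₀, sub_zero] at h
  have hxa : 0 ≤ C / (x - a) := div_nonneg hC (sub_pos.2 hx.1).le
  have hbx : 0 ≤ C / (b - x) := div_nonneg hC (sub_pos.2 hx.2).le
  have hx₀a : 0 ≤ C / (x₀ - a) := div_nonneg hC (sub_pos.2 hx₀.1).le
  have hbx₀ : 0 ≤ C / (b - x₀) := div_nonneg hC (sub_pos.2 hx₀.2).le
  exact h.trans (abs_le.2 ⟨by linarith, by linarith⟩)

theorem abs_sub_midpoint_le_of_abs_deriv_le {C D : ℝ} (hC : 0 ≤ C) (hD : 0 ≤ D) {f f' : ℝ → ℝ}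
    (hf : ∀ x ∈ Ioo a b, HasDerivAt f (f' x) x)
    (hbound : ∀ x ∈ Ioo a b, |f' x| ≤ C / (x - a) + C / (b - x) + D) (hx : x ∈ Ioo a b) :
    |f x - f ((a + b) / 2)| ≤ C * |log (x - a) - log (b - x)| + D * ((b - a) / 2) := by
  have hmid : (a + b) / 2 ∈ Ioo a b := ⟨by linarith [hx.1, hx.2], by linarith [hx.1, hx.2]⟩
  have h := abs_sub_le_abs_sub_of_abs_deriv_le (convex_Ioo a b) hf
    (fun y hy => hasDerivAt_mul_log_sub_log_add_mul C D hy) hbound hmid hx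
  have hdist : |x - (a + b) / 2| ≤ (b - a) / 2 := abs_le.2 ⟨by linarith [hx.1], by linarith [hx.2]⟩
  calc |f x - f ((a + b) / 2)|
      ≤ |C * (log (x - a) - log (b - x)) + D * (x - (a + b) / 2)| := by
        convert h using 2
        rw [show (a + b) / 2 - a = b - (a + b) / 2 by ring]
        ring
    _ ≤ C * |log (x - a) - log (b - x)| + D * ((b - a) / 2) := by
        refine (abs_add_le _ _).trans ?_
        rw [abs_mul, abs_mul, abs_of_nonneg hC, abs_of_nonneg hD]
        gcongr

theorem volume_abs_log_sub_log_ge_le (hab : a ≤ b) (s : ℝ) :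
    (volume {x ∈ Ioo a b | s ≤ |log (x - a) - log (b - x)|}).toReal ≤ (b - a) * exp (-s / 2) := by
  set E := exp s
  have hE : 0 < 1 + E := by positivity
  have hsub : {x ∈ Ioo a b | s ≤ |log (x - a) - log (b - x)|} ⊆
      Ioc a ((a * E + b) / (1 + E)) ∪ Ico ((a + b * E) / (1 + E)) b := by
    rintro x ⟨hx, hsx⟩
    have hxa : 0 < x - a := sub_pos.2 hx.1
    have hbx : 0 < b - x := sub_pos.2 hx.2
    rcases le_abs'.1 hsx with h | h
    · have := exp_mul_le_of_le_log_sub_log (s := s) hbx hxa (by linarith)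
      exact Or.inl ⟨hx.1, by rw [le_div_iff₀ hE]; linarith⟩
    · have := exp_mul_le_of_le_log_sub_log hxa hbx h
      exact Or.inr ⟨by rw [div_le_iff₀ hE]; linarith, hx.2⟩
  have hp : a ≤ (a * E + b) / (1 + E) := by rw [le_div_iff₀ hE]; linarith
  have hq : (a + b * E) / (1 + E) ≤ b := by rw [div_le_iff₀ hE]; linarith
  calc (volume {x ∈ Ioo a b | s ≤ |log (x - a) - log (b - x)|}).toReal
      ≤ volume.real (Ioc a ((a * E + b) / (1 + E))) +
          volume.real (Ico ((a + b * E) / (1 + E)) b) :=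
        (measureReal_mono hsub (measure_union_lt_top measure_Ioc_lt_top measure_Ico_lt_top).ne).trans
          (measureReal_union_le _ _)
    _ = (b - a) * (2 / (1 + E)) := by
        rw [Real.volume_real_Ioc_of_le hp, Real.volume_real_Ico_of_le hq]
        field_simp
        ring
    _ ≤ (b - a) * exp (-s / 2) := by
        gcongr
        exact two_div_one_add_exp_le s

end Barriers

theorem stmt1_general (a b C : ℝ) (hC : 0 < C)
    (g g' g'' : ℝ → ℝ)
    (hg : ∀ x ∈ Set.Ioo a b, HasDerivAt g (g' x) x)
    (hg' : ∀ x ∈ Set.Ioo a b, HasDerivAt g' (g'' x) x)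
    (hbound : ∀ x ∈ Set.Ioo a b, |g'' x| ≤ C / (x - a) ^ 2 + C / (b - x) ^ 2)
    (x₀ : ℝ) (hx₀ : x₀ ∈ Set.Ioo a b) (hx₀' : g' x₀ = 0)
    (K : ℝ) (hK : K = (1 / 4) * Real.exp ((b - a) / (x₀ - a) + (b - a) / (b - x₀))) :
    ∀ t : ℝ, 0 ≤ t →
      (volume {x ∈ Set.Ioo a b | t ≤ |g x - g ((a + b) / 2)|}).toReal / (b - a) ≤
        2 * Real.sqrt K * Real.exp (-t / (2 * C)) := by
  intro t _
  have hxa : 0 < x₀ - a := sub_pos.2 hx₀.1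
  have hbx : 0 < b - x₀ := sub_pos.2 hx₀.2
  have hab : a < b := hx₀.1.trans hx₀.2
  have hba : 0 < b - a := sub_pos.2 hab
  set D := C / (x₀ - a) + C / (b - x₀)
  set M := (b - a) / (x₀ - a) + (b - a) / (b - x₀)
  have hD : 0 ≤ D := by positivity
  have hDM : D * (b - a) = C * M := by simp only [D, M]; field_simp
  have hsub : {x ∈ Ioo a b | t ≤ |g x - g ((a + b) / 2)|} ⊆
      {x ∈ Ioo a b | t / C - M ≤ |log (x - a) - log (b - x)|} := by
    rintro x ⟨hx, htx⟩
    have hgx := abs_sub_midpoint_le_of_abs_deriv_le hC.le hD hg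
      (fun y hy => abs_le_div_add_div_of_abs_deriv_le hC.le hg' hbound hx₀ hx₀' hy) hx
    refine ⟨hx, ?_⟩
    rw [sub_le_iff_le_add, div_le_iff₀ hC]
    linarith [mul_nonneg hD hba.le]
  have hsqrtK : √K = exp (M / 2) / 2 := by
    rw [hK, sqrt_mul (by norm_num), ← exp_half, show √(1 / 4 : ℝ) = 1 / 2 by
      norm_num [sqrt_eq_iff_mul_self_eq]]
    ring
  have hRHS : 2 * √K * exp (-t / (2 * C)) = exp (-(t / C - M) / 2) := by
    rw [hsqrtK, mul_div_cancel₀ _ two_ne_zero, ← exp_add]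
    congr 1
    field_simp
    ring
  have hfin : volume {x ∈ Ioo a b | t / C - M ≤ |log (x - a) - log (b - x)|} ≠ ⊤ :=
    ((measure_mono (sep_subset _ _)).trans_lt measure_Ioo_lt_top).ne
  rw [hRHS, div_le_iff₀ hba, mul_comm]
  exact (measureReal_mono hsub hfin).trans (volume_abs_log_sub_log_ge_le hab.le _)

theorem stmt1 (a b C : ℝ) (hab : a < b) (hC : 0 < C)
    (g g' g'' : ℝ → ℝ)
    (hg : ∀ x ∈ Set.Ioo a b, HasDerivAt g (g' x) x)
    (hg' : ∀ x ∈ Set.Ioo a b, HasDerivAt g' (g'' x) x)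
    (hg''cont : ContinuousOn g'' (Set.Ioo a b))
    (hbound : ∀ x ∈ Set.Ioo a b, |g'' x| ≤ C / (x - a) ^ 2 + C / (b - x) ^ 2)
    (x₀ : ℝ) (hx₀ : x₀ ∈ Set.Ioo a b) (hx₀' : g' x₀ = 0)
    (K : ℝ) (hK : K = (1 / 4) * Real.exp ((b - a) / (x₀ - a) + (b - a) / (b - x₀))) :
    ∀ t : ℝ, 0 ≤ t →
      (volume {x ∈ Set.Ioo a b | t ≤ |g x - g ((a + b) / 2)|}).toReal / (b - a) ≤
        2 * Real.sqrt K * Real.exp (-t / (2 * C)) :=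
  stmt1_general a b C hC g g' g'' hg hg' hbound x₀ hx₀ hx₀' K hK
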